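/- Let A be a symmetric positive definite real 3×3 matrix, let ε > 0 and φ ∈ ℝ, and let S denote the unique positive semidefinite square root of φ²·I + 4ε·A. Then the matrix S + φ·I is invertible and (1/(2ε))·(−φ·I + S) = 2·A·(S + φ·I)⁻¹. -/
import Mathlib


open Matrix

abbrev Mat := Matrix (Fin 3) (Fin 3) ℝ

/-- With `S` the positive semidefinite square root of `φ²·I + 4ε·A`
(`A` symmetric positive definite, `ε > 0`), the matrix `S + φ·I` is invertible and
`(1/(2ε))·(−φ·I + S) = 2·A·(S + φ·I)⁻¹`. -/
theorem ifebm_reformulation (A : Mat) (hA : A.PosDef) (ε : ℝ) (hε : 0 < ε) (φ : ℝ)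
    (S : Mat) (hS : S.PosSemidef) (hS2 : S * S = φ ^ 2 • (1 : Mat) + (4 * ε) • A) :
    IsUnit (S + φ • (1 : Mat)) ∧
      (1 / (2 * ε)) • (-(φ • (1 : Mat)) + S) = (2 : ℝ) • A * (S + φ • (1 : Mat))⁻¹ := by
  have key : (S - φ • (1 : Mat)) * (S + φ • (1 : Mat)) = (4 * ε) • A := by
    have e1 : S * (φ • (1 : Mat)) = φ • S := by rw [Matrix.mul_smul, Matrix.mul_one]
    have e2 : (φ • (1 : Mat)) * S = φ • S := by rw [Matrix.smul_mul, Matrix.one_mul]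
    have e3 : (φ • (1 : Mat)) * (φ • (1 : Mat)) = (φ ^ 2) • (1 : Mat) := by
      rw [Matrix.smul_mul, Matrix.mul_smul, Matrix.one_mul, smul_smul, pow_two]
    rw [sub_mul, mul_add, mul_add, e1, e2, e3, hS2]
    abel
  have hAunit : IsUnit ((4 * ε) • A : Mat) := by
    have hdA : IsUnit A.det := isUnit_iff_ne_zero.mpr hA.det_pos.ne'
    rw [Matrix.isUnit_iff_isUnit_det, Matrix.det_smul]
    exact (isUnit_iff_ne_zero.mpr (by positivity)).mul hdA
  have hprod : IsUnit ((S - φ • (1 : Mat)) * (S + φ • (1 : Mat))) := key ▸ hAunit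
  have hunit : IsUnit (S + φ • (1 : Mat)) := by
    rw [Matrix.isUnit_iff_isUnit_det] at hprod ⊢
    rw [Matrix.det_mul] at hprod
    exact isUnit_of_mul_isUnit_right hprod
  refine ⟨hunit, ?_⟩
  have hdet := (Matrix.isUnit_iff_isUnit_det _).mp hunit
  have hmul : (1 / (2 * ε)) • (-(φ • (1 : Mat)) + S) * (S + φ • (1 : Mat)) =
      (2 : ℝ) • A := by
    rw [Matrix.smul_mul, show -(φ • (1 : Mat)) + S = S - φ • (1 : Mat) by abel, key,
      smul_smul, show (1 / (2 * ε)) * (4 * ε) = (2 : ℝ) by field_simp; ring]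
  calc (1 / (2 * ε)) • (-(φ • (1 : Mat)) + S)
      = ((1 / (2 * ε)) • (-(φ • (1 : Mat)) + S) * (S + φ • (1 : Mat))) *
        (S + φ • (1 : Mat))⁻¹ := by
        rw [Matrix.mul_assoc, Matrix.mul_nonsing_inv _ hdet, Matrix.mul_one]
    _ = (2 : ℝ) • A * (S + φ • (1 : Mat))⁻¹ := by rw [hmul]
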